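/- Let ζ be a Pisot number of degree 2. Then σ̲(1,ζ) = σ̄(1,ζ) = 1 if and only if ζ is a Pisot unit. -/

import Mathlib

open Filter Polynomial

/-- Distance from a real number to the nearest integer. -/
noncomputable def nearestDist (x : ℝ) : ℝ := |x - round x|

open Classical in
/-- `σ_n(α,ζ) = -log‖αζⁿ‖/(n log ζ)`, valued in `(-∞,∞]`, with value `∞` when `αζⁿ ∈ ℤ`. -/
noncomputable def sigmaFn (α ζ : ℝ) (n : ℕ) : EReal :=
  if ∃ m : ℤ, α * ζ ^ n = (m : ℝ) then ⊤
  else ((-(Real.log (nearestDist (α * ζ ^ n)) / (n * Real.log ζ)) : ℝ) : EReal)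

/-- `σ̲(α,ζ) = liminf σ_n(α,ζ)`. -/
noncomputable def sigmaLower (α ζ : ℝ) : EReal := Filter.liminf (sigmaFn α ζ) Filter.atTop

/-- `σ̄(α,ζ) = limsup σ_n(α,ζ)`. -/
noncomputable def sigmaUpper (α ζ : ℝ) : EReal := Filter.limsup (sigmaFn α ζ) Filter.atTop

/-- A Pisot number: a real algebraic integer `ζ > 1` all of whose conjugates other than `ζ`
itself have absolute value strictly less than 1. -/
def IsPisot (ζ : ℝ) : Prop :=
  1 < ζ ∧ IsIntegral ℤ ζ ∧
    ∀ z : ℂ, Polynomial.aeval z (minpoly ℚ ζ) = 0 → z ≠ (ζ : ℂ) → ‖z‖ < 1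

/-- A Pisot unit: a Pisot number which is a unit in the ring of algebraic integers,
equivalently the constant coefficient of its monic minimal polynomial over `ℤ` is `±1`. -/
def IsPisotUnit (ζ : ℝ) : Prop :=
  IsPisot ζ ∧ ((minpoly ℤ ζ).coeff 0 = 1 ∨ (minpoly ℤ ζ).coeff 0 = -1)

/-!
If `ζ` has degree two with conjugate `η`, then `0 < |η| < 1` and `ζⁿ + ηⁿ` is an integer (a power sum
of the roots of `X² + bX + c`), so for large `n` the nearest integer to `ζⁿ` is at distance exactly
`|η|ⁿ`. Hence `σ_n(1, ζ) = -log |η| / log ζ` eventually, and this constant is `1` exactly when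
`|ζη| = 1`, i.e. when the norm `c = ζη` is `±1`.
-/

theorem exists_int_pow_add_pow_eq {R : Type*} [CommRing R] {x y : R} {s p : ℤ}
    (hs : x + y = s) (hp : x * y = p) (n : ℕ) : ∃ m : ℤ, x ^ n + y ^ n = m := by
  induction n using Nat.twoStepInduction with
  | zero => exact ⟨2, by norm_num⟩
  | one => exact ⟨s, by simpa using hs⟩
  | more n ih₀ ih₁ =>
    obtain ⟨a, ha⟩ := ih₀
    obtain ⟨b, hb⟩ := ih₁
    refine ⟨s * b - p * a, ?_⟩
    push_cast
    rw [← ha, ← hb, ← hs, ← hp]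
    ring

theorem nearestDist_eq_abs_sub_intCast {x : ℝ} {m : ℤ} (h : |x - m| < 1 / 2) :
    nearestDist x = |x - m| := by
  obtain ⟨h₁, h₂⟩ := abs_lt.mp h
  rw [nearestDist, (round_eq_iff (n := m)).mpr ⟨by linarith, by linarith⟩]

theorem sigmaFn_one_eq_of_abs_sub_intCast {ζ : ℝ} {n : ℕ} {m : ℤ} (h₀ : 0 < |ζ ^ n - m|)
    (h : |ζ ^ n - m| < 1 / 2) :
    sigmaFn 1 ζ n = ((-(Real.log |ζ ^ n - m| / (n * Real.log ζ)) : ℝ) : EReal) := by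
  have hnot : ¬∃ k : ℤ, 1 * ζ ^ n = k := by
    rintro ⟨k, hk⟩
    rw [one_mul] at hk
    have : |k - m| < 1 := by
      rw [hk] at h
      exact_mod_cast h.trans one_half_lt_one
    obtain rfl : k = m := by rw [abs_lt] at this; omega
    simp [hk] at h₀
  rw [sigmaFn, if_neg hnot, one_mul, nearestDist_eq_abs_sub_intCast h]

theorem eventually_sigmaFn_one_eq {ζ η : ℝ} (hη₀ : η ≠ 0) (hη₁ : |η| < 1)
    (hint : ∀ n : ℕ, ∃ m : ℤ, ζ ^ n + η ^ n = m) :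
    ∀ᶠ n in atTop, sigmaFn 1 ζ n = ((-(Real.log |η| / Real.log ζ) : ℝ) : EReal) := by
  filter_upwards [(tendsto_pow_atTop_nhds_zero_of_lt_one (abs_nonneg η) hη₁).eventually_lt_const
    one_half_pos, eventually_ne_atTop 0] with n hn hn₀
  obtain ⟨m, hm⟩ := hint n
  have hdist : |ζ ^ n - m| = |η| ^ n := by rw [← hm, sub_add_cancel_left, abs_neg, abs_pow]
  rw [sigmaFn_one_eq_of_abs_sub_intCast (hdist ▸ pow_pos (abs_pos.mpr hη₀) n) (hdist ▸ hn),
    hdist, Real.log_pow, mul_div_mul_left _ _ (Nat.cast_ne_zero.mpr hn₀)]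

theorem neg_log_div_log_eq_one_iff {r ζ : ℝ} (hr : 0 < r) (hζ₀ : 0 < ζ) (hζ₁ : ζ ≠ 1) :
    -(Real.log r / Real.log ζ) = 1 ↔ r * ζ = 1 := by
  rw [← neg_div, div_eq_one_iff_eq (Real.log_ne_zero_of_pos_of_ne_one hζ₀ hζ₁), ← Real.log_inv,
    Real.log_injOn_pos.eq_iff (inv_pos.mpr hr) hζ₀]
  exact ⟨fun h ↦ h ▸ mul_inv_cancel₀ hr.ne', inv_eq_of_mul_eq_one_right⟩

theorem exists_conj_of_isMonicOfDegree_two {R A : Type*} [CommRing R] [Nontrivial R] [CommRing A]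
    [Algebra R A] {p : R[X]} (hp : IsMonicOfDegree p 2) {ζ : A} (hζ : aeval ζ p = 0) :
    ∃ η : A, aeval η p = 0 ∧ ζ + η = algebraMap R A (-p.coeff 1) ∧
      ζ * η = algebraMap R A (p.coeff 0) := by
  obtain ⟨a, b, rfl⟩ := isMonicOfDegree_two_iff.mp hp
  have hcoeff₀ : (X ^ 2 + C a * X + C b).coeff 0 = b := by simp
  have hcoeff₁ : (X ^ 2 + C a * X + C b).coeff 1 = a := by simp
  simp only [map_add, map_pow, map_mul, aeval_X, aeval_C] at hζ
  refine ⟨-algebraMap R A a - ζ, ?_, ?_, ?_⟩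
  · simp only [map_add, map_pow, map_mul, aeval_X, aeval_C]
    linear_combination hζ
  · rw [hcoeff₁, map_neg]
    ring
  · rw [hcoeff₀]
    linear_combination -hζ

theorem IsPisot.exists_conj_of_natDegree_eq_two {ζ : ℝ} (hP : IsPisot ζ)
    (hdeg : (minpoly ℚ ζ).natDegree = 2) :
    ∃ η : ℝ, η ≠ 0 ∧ |η| < 1 ∧ (∃ s : ℤ, ζ + η = s) ∧ ζ * η = (minpoly ℤ ζ).coeff 0 := by
  obtain ⟨-, hint, hconj⟩ := hP
  have hmap : minpoly ℚ ζ = (minpoly ℤ ζ).map (algebraMap ℤ ℚ) :=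
    minpoly.isIntegrallyClosed_eq_field_fractions' ℚ hint
  have hirr : ∀ q : ℚ, ζ ≠ q := fun q hq ↦ by
    rw [(minpoly.natDegree_eq_one_iff).mpr ⟨q, hq.symm⟩] at hdeg
    omega
  have hp2 : IsMonicOfDegree (minpoly ℤ ζ) 2 :=
    ⟨by rwa [hmap, (minpoly.monic hint).natDegree_map] at hdeg, minpoly.monic hint⟩
  obtain ⟨η, hη, hsum, hprod⟩ := exists_conj_of_isMonicOfDegree_two hp2 (minpoly.aeval ℤ ζ)
  simp only [algebraMap_int_eq, eq_intCast] at hsum hprod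
  have hroot : aeval (η : ℂ) (minpoly ℚ ζ) = 0 := by
    rw [hmap, aeval_map_algebraMap, ← Complex.coe_algebraMap, aeval_algebraMap_apply, hη, map_zero]
  refine ⟨η, fun h ↦ hirr (-(minpoly ℤ ζ).coeff 1) ?_, ?_, ⟨_, hsum⟩, hprod⟩
  · push_cast at hsum ⊢
    linarith
  · have hne : (η : ℂ) ≠ ζ := fun h ↦ hirr (-(minpoly ℤ ζ).coeff 1 / 2) <| by
      push_cast at hsum ⊢
      linarith [Complex.ofReal_injective h]
    simpa using hconj η hroot hne

/-- A Pisot number `ζ` of degree 2 satisfies `σ̲(1,ζ) = σ̄(1,ζ) = 1`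
if and only if `ζ` is a Pisot unit. -/
theorem pisot_deg_two_sigma_one_iff_unit (ζ : ℝ) (hP : IsPisot ζ)
    (hdeg : (minpoly ℚ ζ).natDegree = 2) :
    (sigmaLower 1 ζ = 1 ∧ sigmaUpper 1 ζ = 1) ↔ IsPisotUnit ζ := by
  obtain ⟨η, hη₀, hη₁, ⟨s, hsum⟩, hprod⟩ := hP.exists_conj_of_natDegree_eq_two hdeg
  have hζ₀ : 0 < ζ := zero_lt_one.trans hP.1
  have hev := eventually_sigmaFn_one_eq hη₀ hη₁ (exists_int_pow_add_pow_eq hsum hprod)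
  have hnorm : |η| * ζ = |((minpoly ℤ ζ).coeff 0 : ℝ)| := by
    rw [← hprod, abs_mul, abs_of_pos hζ₀, mul_comm]
  rw [sigmaLower, sigmaUpper, liminf_congr hev, limsup_congr hev, liminf_const, limsup_const,
    and_self, EReal.coe_eq_one, neg_log_div_log_eq_one_iff (abs_pos.mpr hη₀) hζ₀ hP.1.ne', hnorm,
    abs_eq zero_le_one, IsPisotUnit, and_iff_right hP]
  norm_cast
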